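/- arXiv:1804.03945 — 3 statements merged into one kernel-verified Lean document; each statement's English description precedes it below -/
import Mathlib

section
/- Let W : ℝ/2πℤ × ℝ/2πℤ → U(r) be a continuous map satisfying W(k_x, -k_y) · W(k_x, k_y) = e^{i k_x} · 1 for all (k_x, k_y). Then r is even; more precisely, if d denotes the winding number of the map k_x ↦ det W(k_x, 0) : ℝ/2πℤ → U(1), then 2d = r. -/
/-!
Squaring the relation at `k_y = 0` gives `W(k_x, 0)² = e^{i k_x} · 1`, hence
`det W(k_x, 0)² = e^{i r k_x}`. So `2θ` and `k_x ↦ r k_x` are two continuous phase lifts of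
the same circle-valued map; their difference takes values in the discrete set `2πℤ` and is
therefore constant. Comparing it at `0` and `2π` gives `2 · 2πd = 2πr`.
-/

open Real

theorem Matrix.det_sq_of_mul_self_eq_smul_one {n R : Type*} [Fintype n] [DecidableEq n]
    [CommRing R] {A : Matrix n n R} {c : R} (h : A * A = c • 1) :
    A.det ^ 2 = c ^ Fintype.card n := by
  rw [sq, ← det_mul, h, det_smul, det_one, mul_one]

theorem sub_eq_sub_of_continuous_of_exp_mul_I_eq {X : Type*} [TopologicalSpace X]
    [PreconnectedSpace X] {φ ψ : X → ℝ} (hφ : Continuous φ) (hψ : Continuous ψ)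
    (h : ∀ x, Complex.exp (Complex.I * φ x) = Complex.exp (Complex.I * ψ x)) (x y : X) :
    φ x - ψ x = φ y - ψ y := by
  have hmaps : Set.MapsTo (φ - ψ) Set.univ (AddSubgroup.zmultiples (2 * π)) := by
    intro z _
    have hz : Circle.exp (φ z) = Circle.exp (ψ z) := by
      ext
      simpa only [Circle.coe_exp, mul_comm Complex.I] using h z
    obtain ⟨m, hm⟩ := Circle.exp_eq_exp.1 hz
    exact AddSubgroup.mem_zmultiples_iff.2 ⟨m, by simp [hm, zsmul_eq_mul]⟩
  exact isPreconnected_univ.constant_of_mapsTo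
    (isDiscrete_iff_discreteTopology.2
      (inferInstance : DiscreteTopology (AddSubgroup.zmultiples (2 * π))))
    (hφ.sub hψ).continuousOn hmaps trivial trivial

theorem winding_of_glide_symbol_is_half_rank_general
    (r : ℕ) (W : ℝ → ℝ → Matrix (Fin r) (Fin r) ℂ)
    (hWrel : ∀ x y, W x (-y) * W x y = Complex.exp (Complex.I * x) • 1)
    (θ : ℝ → ℝ) (hθ : Continuous θ)
    (hdet : ∀ x, (W x 0).det = Complex.exp (Complex.I * θ x))
    (d : ℤ) (hwind : ∀ x, θ (x + 2 * π) = θ x + 2 * π * (d : ℝ)) :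
    2 * d = (r : ℤ) := by
  have hphase : ∀ x : ℝ, Complex.exp (Complex.I * ↑(2 * θ x)) =
      Complex.exp (Complex.I * ↑(r * x)) := by
    intro x
    have hsq := Matrix.det_sq_of_mul_self_eq_smul_one (by simpa using hWrel x 0)
    rw [hdet, Fintype.card_fin, ← Complex.exp_nat_mul, ← Complex.exp_nat_mul] at hsq
    push_cast
    convert hsq using 2 <;> ring
  have hlift := sub_eq_sub_of_continuous_of_exp_mul_I_eq (hθ.const_mul 2)
    (continuous_const_mul (r : ℝ)) hphase (0 + 2 * π) 0
  rw [hwind] at hlift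
  have hreal : (2 * π) * (2 * d - r) = 0 := by linarith
  have h2d : (2 * d : ℝ) = r := by
    simpa [pi_ne_zero, sub_eq_zero] using hreal
  exact_mod_cast h2d

/-- If a continuous `2π`-periodic family `W : ℝ/2πℤ × ℝ/2πℤ → U(r)` satisfies
`W(k_x, -k_y) W(k_x, k_y) = e^{i k_x} · 1`, and `d` is the winding number of
`k_x ↦ det W(k_x, 0)` (given via a continuous phase lift `θ`), then `2d = r`;
in particular `r` is even. -/
theorem winding_of_glide_symbol_is_half_rank
    (r : ℕ) (W : ℝ → ℝ → Matrix (Fin r) (Fin r) ℂ)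
    (hWcont : Continuous fun p : ℝ × ℝ => W p.1 p.2)
    (hWperx : ∀ x y, W (x + 2 * π) y = W x y)
    (hWpery : ∀ x y, W x (y + 2 * π) = W x y)
    (hWunit : ∀ x y, W x y ∈ Matrix.unitaryGroup (Fin r) ℂ)
    (hWrel : ∀ x y, W x (-y) * W x y = Complex.exp (Complex.I * x) • 1)
    (θ : ℝ → ℝ) (hθ : Continuous θ)
    (hdet : ∀ x, (W x 0).det = Complex.exp (Complex.I * θ x))
    (d : ℤ) (hwind : ∀ x, θ (x + 2 * π) = θ x + 2 * π * (d : ℝ)) :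
    2 * d = (r : ℤ) :=
  winding_of_glide_symbol_is_half_rank_general r W hWrel θ hθ hdet d hwind
end

section
/- Let ζ : ℝ/2πℤ → U(1) be a continuous map satisfying ζ(ℓ + π) = conjugate(ζ(ℓ)) for all ℓ. Then the winding number of ζ around the circle is zero. -/
/-!
Write `ζ = exp (i θ)`. Equivariance gives `exp (i θ(ℓ + π)) = exp (-i θ ℓ)`, so
`θ (ℓ + π) + θ ℓ` is a continuous function with values in the discrete set `2πℤ`, hence constant.
Comparing its values at `0` and `π` gives `θ (2π) = θ 0`, i.e. `2π d = 0`.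
-/

open Real

theorem add_mem_zmultiples_two_pi_of_exp_mul_I_eq_conj {a b : ℝ}
    (h : Complex.exp (Complex.I * a) = starRingEnd ℂ (Complex.exp (Complex.I * b))) :
    a + b ∈ AddSubgroup.zmultiples (2 * π) := by
  have hexp : Circle.exp a = Circle.exp (-b) := by
    ext
    simp only [Circle.coe_exp, ← Complex.exp_conj, map_mul, Complex.conj_I, Complex.conj_ofReal] at h ⊢
    rw [mul_comm, h]
    push_cast
    ring_nf
  obtain ⟨m, hm⟩ := Circle.exp_eq_exp.mp hexp
  exact ⟨m, by simp only [zsmul_eq_mul, hm]; ring⟩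

theorem Function.periodic_two_mul_of_add_mem_of_isDiscrete {A : Type*} [AddCommGroup A]
    [TopologicalSpace A] [ContinuousAdd A] {θ : ℝ → A} (hθ : Continuous θ) {T : Set A}
    (hT : IsDiscrete T) {p : ℝ} (h : ∀ x, θ (x + p) + θ x ∈ T) :
    Function.Periodic θ (2 * p) := by
  intro x
  have hconst : θ (x + p + p) + θ (x + p) = θ (x + p) + θ x :=
    isPreconnected_univ.constant_of_mapsTo hT (by fun_prop) (fun y _ => h y) trivial trivial
  rw [two_mul, ← add_assoc]
  exact add_right_cancel (hconst.trans (add_comm _ _))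

theorem equivariant_circle_map_has_zero_winding_general
    (ζ : ℝ → ℂ)
    (hequiv : ∀ ℓ, ζ (ℓ + π) = starRingEnd ℂ (ζ ℓ)) :
    ∀ (θ : ℝ → ℝ) (d : ℤ), Continuous θ →
      (∀ ℓ, ζ ℓ = Complex.exp (Complex.I * θ ℓ)) →
      (∀ ℓ, θ (ℓ + 2 * π) = θ ℓ + 2 * π * (d : ℝ)) →
      d = 0 := by
  intro θ d hθc hθ hwind
  have hsum (ℓ : ℝ) : θ (ℓ + π) + θ ℓ ∈ AddSubgroup.zmultiples (2 * π) :=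
    add_mem_zmultiples_two_pi_of_exp_mul_I_eq_conj (by rw [← hθ, ← hθ, hequiv])
  have hperiodic : Function.Periodic θ (2 * π) :=
    Function.periodic_two_mul_of_add_mem_of_isDiscrete hθc
      (isDiscrete_iff_discreteTopology.mpr
        (inferInstanceAs (DiscreteTopology (AddSubgroup.zmultiples (2 * π))))) hsum
  have h2pid : 2 * π * (d : ℝ) = 0 := by linarith [hwind 0, hperiodic 0]
  exact_mod_cast (mul_eq_zero.mp h2pid).resolve_left (by positivity)

/-- A continuous `2π`-periodic map `ζ : ℝ/2πℤ → U(1)` satisfying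
`ζ(ℓ + π) = conj(ζ(ℓ))` has winding number zero: for any continuous phase lift `θ`
with winding number `d`, necessarily `d = 0`. -/
theorem equivariant_circle_map_has_zero_winding
    (ζ : ℝ → ℂ) (hcont : Continuous ζ)
    (hper : ∀ ℓ, ζ (ℓ + 2 * π) = ζ ℓ)
    (hnorm : ∀ ℓ, ‖ζ ℓ‖ = 1)
    (hequiv : ∀ ℓ, ζ (ℓ + π) = starRingEnd ℂ (ζ ℓ)) :
    ∀ (θ : ℝ → ℝ) (d : ℤ), Continuous θ →
      (∀ ℓ, ζ ℓ = Complex.exp (Complex.I * θ ℓ)) →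
      (∀ ℓ, θ (ℓ + 2 * π) = θ ℓ + 2 * π * (d : ℝ)) →
      d = 0 :=
  equivariant_circle_map_has_zero_winding_general ζ hequiv
end

section
/- On the Hilbert space L²(S¹) ⊗ ℂ² with S¹ = ℝ/2πℤ (variable k_y), fix k_x ∈ ℝ/2πℤ and define the unitary Ṽ = I ∘ M, where (I ψ)(k_y) = ψ(−k_y) and M is pointwise multiplication by e^{i k_y} V(k_x) with V(k_x) = ((0, e^{ik_x}), (1, 0)). Then Ṽ² = e^{ik_x} · 1, and Ṽ anticommutes with the grading ε whose +1 eigenspace is the closed span of {e^{ily} ⊗ v : l ≥ 0} and −1 eigenspace the closed span of {e^{ily} ⊗ v : l ≤ −1}. -/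
/-! `Vt` is a weighted permutation of the Hilbert basis: it sends `e p` to a unimodular multiple
of `e (glide p)`, where `glide (l, i) = (-(l + 1), 1 - i)` is an involution. So `Vt` maps an
orthonormal basis to an orthonormal family and is an isometry; `Vt²` multiplies `e p` by the product
of the two phases along the orbit `{p, glide p}`, which is always `e^{i k_x}`; and `Vt` anticommutes
with `ε` because `glide` exchanges the modes `l ≥ 0` and `l ≤ -1`. -/

section

open ContinuousLinearMap

variable {ι 𝕜 E : Type*} [RCLike 𝕜] [NormedAddCommGroup E] [InnerProductSpace 𝕜 E]

theorem Orthonormal.smul_comp {ι' : Type*} {v : ι → E} (hv : Orthonormal 𝕜 v) {σ : ι' → ι}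
    (hσ : Function.Injective σ) {u : ι' → 𝕜} (hu : ∀ i, ‖u i‖ = 1) :
    Orthonormal 𝕜 fun i ↦ u i • v (σ i) := by
  refine ⟨fun i ↦ by rw [norm_smul, hu, hv.norm_eq_one, one_mul], fun i j hij ↦ ?_⟩
  dsimp only
  rw [inner_smul_left, inner_smul_right, hv.inner_eq_zero (hσ.ne hij), mul_zero, mul_zero]

namespace HilbertBasis

variable (b : HilbertBasis ι 𝕜 E)

theorem ext_continuousLinearMap {F : Type*} [TopologicalSpace F] [AddCommMonoid F] [Module 𝕜 F]
    [T2Space F] {f g : E →L[𝕜] F} (h : ∀ i, f (b i) = g (b i)) : f = g :=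
  ext_on (Submodule.dense_iff_topologicalClosure_eq_top.mpr b.dense_span)
    (by rintro _ ⟨i, rfl⟩; exact h i)

theorem ext_inner {x y : E} (h : ∀ i, inner 𝕜 (b i) x = inner 𝕜 (b i) y) : x = y :=
  b.repr.injective <| lp.ext <| funext fun i ↦ by
    simp only [HilbertBasis.repr_apply_apply, h]

theorem adjoint_comp_self_eq_one [CompleteSpace E] {F : Type*} [NormedAddCommGroup F]
    [InnerProductSpace 𝕜 F] [CompleteSpace F] {T : E →L[𝕜] F} (hT : Orthonormal 𝕜 (T ∘ b)) :
    adjoint T ∘L T = 1 :=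
  b.ext_continuousLinearMap fun j ↦ b.ext_inner fun i ↦ by
    classical
    rw [comp_apply, adjoint_inner_right, one_apply_eq_self]
    exact (orthonormal_iff_ite.mp hT i j).trans (orthonormal_iff_ite.mp b.orthonormal i j).symm

variable {σ : ι → ι} {u : ι → 𝕜} {T : E →L[𝕜] E}

theorem norm_map_of_apply_eq_smul [CompleteSpace E] (hT : ∀ i, T (b i) = u i • b (σ i))
    (hσ : Function.Injective σ) (hu : ∀ i, ‖u i‖ = 1) (x : E) : ‖T x‖ = ‖x‖ := by
  have hTb : Orthonormal 𝕜 (T ∘ b) := by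
    simpa only [Function.comp_def, hT] using b.orthonormal.smul_comp hσ hu
  exact T.norm_map_iff_adjoint_comp_self.mpr (b.adjoint_comp_self_eq_one hTb) x

theorem comp_self_eq_smul_one_of_apply_eq_smul (hT : ∀ i, T (b i) = u i • b (σ i))
    (hσ : Function.Involutive σ) {c : 𝕜} (hu : ∀ i, u i * u (σ i) = c) :
    T ∘L T = c • 1 :=
  b.ext_continuousLinearMap fun i ↦ by
    rw [comp_apply, hT, map_smul, hT, hσ, smul_smul, hu, smul_apply, one_apply_eq_self]

theorem comp_eq_neg_comp_of_apply_eq_smul (hT : ∀ i, T (b i) = u i • b (σ i))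
    {ε : E →L[𝕜] E} {s : ι → 𝕜} (hε : ∀ i, ε (b i) = s i • b i) (hs : ∀ i, s (σ i) = -s i) :
    T ∘L ε = -(ε ∘L T) :=
  b.ext_continuousLinearMap fun i ↦ by
    rw [comp_apply, neg_apply, comp_apply, hε, map_smul, hT, map_smul, hε, hs, smul_comm,
      neg_smul, smul_neg, neg_neg]

end HilbertBasis

end

def glide (p : ℤ × Fin 2) : ℤ × Fin 2 :=
  (-(p.1 + 1), p.2.rev)

theorem glide_involutive : Function.Involutive glide := fun p ↦ by
  simp [glide]

noncomputable def glidePhase (kx : ℝ) : Fin 2 → ℂ :=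
  ![1, Complex.exp (Complex.I * kx)]

theorem norm_glidePhase (kx : ℝ) (i : Fin 2) : ‖glidePhase kx i‖ = 1 := by
  fin_cases i <;> simp [glidePhase, Complex.norm_exp_I_mul_ofReal]

theorem glidePhase_mul_glidePhase_rev (kx : ℝ) (i : Fin 2) :
    glidePhase kx i * glidePhase kx i.rev = Complex.exp (Complex.I * kx) := by
  fin_cases i <;> simp [glidePhase]

def hardySign (l : ℤ) : ℂ :=
  if 0 ≤ l then 1 else -1

theorem hardySign_neg_add_one (l : ℤ) : hardySign (-(l + 1)) = -hardySign l := by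
  unfold hardySign
  split_ifs <;> first | omega | simp

/-- The edge glide reflection operator. On `L²(S¹) ⊗ ℂ²`, modelled as a Hilbert space
with Hilbert basis `e_{(l,i)}` indexed by the Fourier mode `l ∈ ℤ` and `i ∈ Fin 2`,
the unitary `Ṽ = I ∘ M` (inversion composed with multiplication by `e^{i k_y} V(k_x)`,
`V(k_x) = (0, e^{ik_x}; 1, 0)`) acts on basis vectors by
`Ṽ e_{(l,0)} = e_{(-(l+1),1)}` and `Ṽ e_{(l,1)} = e^{ik_x} e_{(-(l+1),0)}`.
It satisfies `Ṽ² = e^{ik_x}·1` and anticommutes with the Hardy grading `ε` whose `±1`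
eigenspaces are spanned by the modes with `l ≥ 0`, resp. `l ≤ -1`. -/
theorem edge_glide_reflection_squares_to_shift
    {H : Type*} [NormedAddCommGroup H] [InnerProductSpace ℂ H] [CompleteSpace H]
    (e : HilbertBasis (ℤ × Fin 2) ℂ H) (kx : ℝ)
    (Vt : H →L[ℂ] H)
    (hV0 : ∀ l : ℤ, Vt (e (l, 0)) = e (-(l + 1), 1))
    (hV1 : ∀ l : ℤ, Vt (e (l, 1)) = Complex.exp (Complex.I * kx) • e (-(l + 1), 0))
    (ε : H →L[ℂ] H)
    (hε : ∀ (l : ℤ) (i : Fin 2), ε (e (l, i)) = if 0 ≤ l then e (l, i) else -e (l, i)) :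
    (∀ v, ‖Vt v‖ = ‖v‖) ∧
    Vt ∘L Vt = Complex.exp (Complex.I * kx) • (1 : H →L[ℂ] H) ∧
    Vt ∘L ε = -(ε ∘L Vt) := by
  have hVe : ∀ p, Vt (e p) = glidePhase kx p.2 • e (glide p) := by
    rintro ⟨l, i⟩
    fin_cases i
    · simp [hV0, glide, glidePhase]
    · simp [hV1, glide, glidePhase]
  have hεe : ∀ p, ε (e p) = hardySign p.1 • e p := by
    rintro ⟨l, i⟩
    rw [hε, hardySign]
    split_ifs <;> simp
  exact ⟨e.norm_map_of_apply_eq_smul hVe glide_involutive.injective (norm_glidePhase kx ·.2),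
    e.comp_self_eq_smul_one_of_apply_eq_smul hVe glide_involutive
      (glidePhase_mul_glidePhase_rev kx ·.2),
    e.comp_eq_neg_comp_of_apply_eq_smul hVe hεe (hardySign_neg_add_one ·.1)⟩
end
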